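/- For all natural numbers q, m, n with m+n > 0 and every rational x, one has ∑_{j=0}^{m+q} C(m+q, j)·(n+q+j)·B_{n+q+j−1}(x) = −(−1)^{m+n}·∑_{k=0}^{n+q} C(n+q, k)·(m+q+k)·B_{m+q+k−1}(−x). (In any term where the subscript n+q+j−1 or m+q+k−1 would be negative, the multiplying factor n+q+j resp. m+q+k is 0, so the term vanishes and natural-number subtraction in the subscript is harmless.) -/

import Mathlib

/-!
Umbral calculus: the linear functional `L : X^k ↦ B_k` sends `(X + x)^k` to `B_k(x)`, so the
left-hand side is `L(P')` for `P = (X + x)^(n+q) (X + x + 1)^(m+q)`, and the right-hand side is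
the same expression for `Q = (X - x)^(m+q) (X - x + 1)^(n+q)`. The reflection
`B_k(1 - x) = (-1)^k B_k(x)` says that `L` is invariant under the substitution `X ↦ -1 - X`,
which maps `Q` to `(-1)^(m+n) P`; as it reverses the sign of derivatives, the identity follows.
-/

open Finset Polynomial

noncomputable def bernoulliUmbral : ℚ[X] →ₗ[ℚ] ℚ :=
  Polynomial.lsum fun k => _root_.bernoulli k • LinearMap.id

lemma bernoulliUmbral_monomial (n : ℕ) (a : ℚ) :
    bernoulliUmbral (monomial n a) = a * _root_.bernoulli n := by
  simp [bernoulliUmbral, Polynomial.lsum_apply, Polynomial.sum_monomial_index, mul_comm]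

lemma bernoulliUmbral_C_mul (a : ℚ) (p : ℚ[X]) :
    bernoulliUmbral (C a * p) = a * bernoulliUmbral p := by
  rw [← smul_eq_C_mul, map_smul, smul_eq_mul]

lemma bernoulliUmbral_X_add_C_pow (x : ℚ) (k : ℕ) :
    bernoulliUmbral ((X + C x) ^ k) = (Polynomial.bernoulli k).eval x := by
  rw [add_pow, map_sum, Polynomial.bernoulli, eval_finsetSum]
  refine sum_congr rfl fun i _ => ?_
  rw [eval_monomial, show X ^ i * C x ^ (k - i) * (k.choose i : ℚ[X]) =
      C (x ^ (k - i) * k.choose i) * monomial i 1 by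
        rw [C_mul, C_pow, C_eq_natCast, ← X_pow_eq_monomial]; ring,
    bernoulliUmbral_C_mul, bernoulliUmbral_monomial]
  ring

lemma bernoulliUmbral_comp_neg_one_sub_X (p : ℚ[X]) :
    bernoulliUmbral (p.comp (-1 - X)) = bernoulliUmbral p := by
  induction p using Polynomial.induction_on' with
  | add p q hp hq => rw [add_comp, map_add, map_add, hp, hq]
  | monomial n a =>
    have hB : bernoulliUmbral ((-1 - X) ^ n) = _root_.bernoulli n := by
      rw [show (-1 - X : ℚ[X]) ^ n = C ((-1) ^ n) * (X + C 1) ^ n by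
          rw [C_pow, map_neg, map_one, ← mul_pow]; ring,
        bernoulliUmbral_C_mul, bernoulliUmbral_X_add_C_pow,
        ← sub_zero (1 : ℚ), bernoulli_eval_one_sub, ← mul_assoc, ← mul_pow]
      simp
    rw [monomial_comp, bernoulliUmbral_C_mul, hB, bernoulliUmbral_monomial]

lemma bernoulliUmbral_derivative_comp_neg_one_sub_X (p : ℚ[X]) :
    bernoulliUmbral (derivative (p.comp (-1 - X))) = -bernoulliUmbral (derivative p) := by
  rw [← bernoulliUmbral_comp_neg_one_sub_X (derivative p), derivative_comp]
  simp

lemma bernoulliUmbral_derivative_pow_mul_pow (A B : ℕ) (y : ℚ) :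
    bernoulliUmbral (derivative ((X + C y) ^ B * (X + C y + 1) ^ A)) =
      ∑ j ∈ range (A + 1),
        (A.choose j : ℚ) * (B + j) * (Polynomial.bernoulli (B + j - 1)).eval y := by
  rw [add_pow (X + C y) 1 A, mul_sum, derivative_sum, map_sum]
  refine sum_congr rfl fun j _ => ?_
  rw [show (X + C y) ^ B * ((X + C y) ^ j * 1 ^ (A - j) * (A.choose j : ℚ[X])) =
      C (A.choose j : ℚ) * (X + C y) ^ (B + j) by rw [pow_add, C_eq_natCast]; ring,
    derivative_C_mul, derivative_X_add_C_pow, ← mul_assoc, ← C_mul, bernoulliUmbral_C_mul,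
    bernoulliUmbral_X_add_C_pow]
  push_cast
  ring

lemma comp_neg_one_sub_X_pow_mul_pow (A B : ℕ) (y : ℚ) :
    ((X + C (-y)) ^ A * (X + C (-y) + 1) ^ B).comp (-1 - X) =
      C ((-1) ^ (A + B)) * ((X + C y) ^ B * (X + C y + 1) ^ A) := by
  simp only [mul_comp, pow_comp, add_comp, X_comp, C_comp, one_comp]
  rw [show (-1 - X + C (-y) + 1 : ℚ[X]) = C (-1) * (X + C y) by simp; ring,
    show (-1 - X + C (-y) : ℚ[X]) = C (-1) * (X + C y + 1) by simp; ring,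
    mul_pow, mul_pow, pow_add, C_mul, C_pow, C_pow]
  ring

theorem momiyama_extension_general (q m n : ℕ) (x : ℚ) :
    ∑ j ∈ Finset.range (m + q + 1),
      ((m + q).choose j : ℚ) * (n + q + j) * (Polynomial.bernoulli (n + q + j - 1)).eval x
    = -(-1 : ℚ) ^ (m + n) *
        ∑ k ∈ Finset.range (n + q + 1),
          ((n + q).choose k : ℚ) * (m + q + k) *
            (Polynomial.bernoulli (m + q + k - 1)).eval (-x) := by
  have hsign : (-1 : ℚ) ^ (m + q + (n + q)) = (-1) ^ (m + n) := by
    rw [show m + q + (n + q) = m + n + 2 * q by ring, pow_add, pow_mul, neg_one_sq, one_pow,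
      mul_one]
  have hreflect := bernoulliUmbral_derivative_comp_neg_one_sub_X
    ((X + C (-x)) ^ (m + q) * (X + C (-x) + 1) ^ (n + q))
  rw [comp_neg_one_sub_X_pow_mul_pow, derivative_C_mul, bernoulliUmbral_C_mul, hsign,
    bernoulliUmbral_derivative_pow_mul_pow, bernoulliUmbral_derivative_pow_mul_pow] at hreflect
  push_cast at hreflect
  rw [neg_eq_iff_eq_neg.mp hreflect.symm, neg_mul_neg, ← mul_assoc, ← mul_pow]
  norm_num

theorem momiyama_extension (q m n : ℕ) (hmn : 0 < m + n) (x : ℚ) :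
    ∑ j ∈ Finset.range (m + q + 1),
      ((m + q).choose j : ℚ) * (n + q + j) * (Polynomial.bernoulli (n + q + j - 1)).eval x
    = -(-1 : ℚ) ^ (m + n) *
        ∑ k ∈ Finset.range (n + q + 1),
          ((n + q).choose k : ℚ) * (m + q + k) *
            (Polynomial.bernoulli (m + q + k - 1)).eval (-x) :=
  momiyama_extension_general q m n x
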